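/- arXiv:2502.13079 — 2 statements merged into one kernel-verified Lean document; each statement's English description precedes it below -/
import Mathlib

section
/- Let λ ∈ (0,1) and let {u^1, ..., u^d} be an orthonormal basis of a hyperplane σ ∈ Gr(d, d+1). If the unit normal v_σ to σ satisfies ⟨v_σ, e_n⟩ ≥ ε > 0 (with n = d+1), then for λ sufficiently small depending on ε (λ = O(γε) for a fixed small constant γ), the rescaled vectors u^{j,λ} := A_λ(u^j)^{-1}(u^j_1/λ, ..., u^j_d/λ, u^j_n), j = 1,...,d, span a hyperplane σ^λ whose unit normal v_{σ^λ} satisfies sqrt(1 − ⟨v_{σ^λ}, e_n⟩) < γ. -/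
private lemma stmt10_aux {γ ε lam S N vn : ℝ} (hγ0 : 0 < γ) (hε : 0 < ε)
    (hlam : 0 < lam) (hlamle : lam ≤ γ * ε) (hεvn : ε ≤ vn)
    (hS0 : 0 ≤ S) (hS1 : S + vn ^ 2 = 1) (hN2 : N ^ 2 = lam ^ 2 * S + vn ^ 2)
    (hvnN : vn ≤ N) : 1 - N⁻¹ * vn < γ ^ 2 := by
  have hvn0 : 0 < vn := lt_of_lt_of_le hε hεvn
  have hN0 : 0 < N := lt_of_lt_of_le hvn0 hvnN
  have hlγv : lam ≤ γ * vn := le_trans hlamle (by nlinarith)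
  have hlam2 : lam ^ 2 ≤ γ ^ 2 * vn ^ 2 := by
    nlinarith [mul_le_mul hlγv hlγv hlam.le (by positivity : (0:ℝ) ≤ γ * vn)]
  have hSle : S ≤ 1 := by nlinarith [sq_nonneg vn]
  have hA : N ^ 2 - vn ^ 2 ≤ γ ^ 2 * vn ^ 2 := by
    nlinarith [mul_le_mul_of_nonneg_left hSle (sq_nonneg lam)]
  have hNv : N - vn < γ ^ 2 * N := by
    nlinarith [mul_pos (mul_pos hγ0 hγ0) hN0, mul_pos hvn0 hN0,
      mul_le_mul_of_nonneg_left hvnN (mul_nonneg (mul_nonneg hγ0.le hγ0.le) hvn0.le),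
      mul_pos hvn0 hvn0]
  have heq : 1 - N⁻¹ * vn = (N - vn) / N := by field_simp
  rw [heq, div_lt_iff₀ hN0]
  nlinarith

/-- Anisotropic rescaling makes a non-degenerate hyperplane almost horizontal: if
`{u^1, …, u^d}` is an orthonormal basis of a hyperplane of `ℝ^{d+1}` with unit normal `v`
satisfying `⟨v, e_n⟩ ≥ ε`, then for `λ ≲ γε` the rescaled renormalized vectors
`u^{j,λ} = A_λ(u^j)^{-1} D_λ(u^j)` span a hyperplane admitting a unit normal `v'` with
`sqrt(1 − ⟨v', e_n⟩) < γ`. -/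
theorem stmt10 (d : ℕ) (hd : 0 < d) (γ : ℝ) (hγ0 : 0 < γ) (hγ1 : γ < 1) :
    ∃ c > 0, ∀ ε : ℝ, 0 < ε →
      ∀ u : Fin d → EuclideanSpace ℝ (Fin (d + 1)), Orthonormal ℝ u →
      ∀ v : EuclideanSpace ℝ (Fin (d + 1)), ‖v‖ = 1 →
        (∀ j, (inner ℝ v (u j) : ℝ) = 0) →
        ε ≤ (inner ℝ v (EuclideanSpace.single (Fin.last d) (1 : ℝ)) : ℝ) →
      ∀ lam : ℝ, 0 < lam → lam ≤ c * γ * ε →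
      ∀ Dlam : EuclideanSpace ℝ (Fin (d + 1)) → EuclideanSpace ℝ (Fin (d + 1)),
        (∀ ξ, ∀ i : Fin (d + 1), Dlam ξ i = if (i : ℕ) < d then ξ i / lam else ξ i) →
      ∃ v' : EuclideanSpace ℝ (Fin (d + 1)), ‖v'‖ = 1 ∧
        (∀ j, (inner ℝ v' (‖Dlam (u j)‖⁻¹ • Dlam (u j)) : ℝ) = 0) ∧
        Real.sqrt (1 - (inner ℝ v' (EuclideanSpace.single (Fin.last d) (1 : ℝ)) : ℝ)) < γ := by
  classical
  refine ⟨1, one_pos, ?_⟩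
  intro ε hε u hu v hv hvu hεv lam hlam hlamle Dlam hD
  set n : Fin (d + 1) := Fin.last d with hn
  have hεvn : ε ≤ v n := by
    have h := hεv
    rw [EuclideanSpace.inner_single_right] at h
    simpa using h
  have hvn0 : 0 < v n := lt_of_lt_of_le hε hεvn
  set w : EuclideanSpace ℝ (Fin (d + 1)) :=
    WithLp.toLp 2 (fun i : Fin (d + 1) => if (i : ℕ) < d then lam * v i else v i) with hw
  have hwn : w n = v n := if_neg (by simp [hn])
  have hnormsq : ∀ x : EuclideanSpace ℝ (Fin (d + 1)), ‖x‖ ^ 2 = ∑ i, x i ^ 2 := by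
    intro x
    rw [EuclideanSpace.norm_eq, Real.sq_sqrt (by positivity)]
    simp [sq_abs]
  set S : ℝ := ∑ i : Fin d, v (Fin.castSucc i) ^ 2 with hS
  have hS0 : 0 ≤ S := Finset.sum_nonneg fun i _ => sq_nonneg _
  have hS1 : S + v n ^ 2 = 1 := by
    have h := hnormsq v
    rw [hv, Fin.sum_univ_castSucc] at h
    linarith [h.symm]
  set N : ℝ := ‖w‖ with hN
  have hN2 : N ^ 2 = lam ^ 2 * S + v n ^ 2 := by
    rw [hN, hnormsq w, Fin.sum_univ_castSucc]
    have h1 : ∀ i : Fin d, w (Fin.castSucc i) = lam * v (Fin.castSucc i) := by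
      intro i; simp [hw, Fin.is_lt i]
    simp only [h1, ← hn, hwn, mul_pow]
    rw [← Finset.mul_sum, hS]
  have hvnN : v n ≤ N := by
    have h2 : v n ^ 2 ≤ N ^ 2 := by nlinarith
    have hN0' : 0 ≤ N := norm_nonneg _
    nlinarith
  have hN0 : 0 < N := lt_of_lt_of_le hvn0 hvnN
  refine ⟨N⁻¹ • w, ?_, ?_, ?_⟩
  · rw [norm_smul, norm_inv, Real.norm_eq_abs, abs_of_pos hN0, ← hN,
      inv_mul_cancel₀ hN0.ne']
  · intro j
    rw [inner_smul_left, inner_smul_right]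
    have : (inner ℝ w (Dlam (u j)) : ℝ) = 0 := by
      have hin : (inner ℝ v (u j) : ℝ) = 0 := hvu j
      rw [PiLp.inner_apply] at hin ⊢
      rw [← hin]
      apply Finset.sum_congr rfl
      intro i _
      simp only [RCLike.inner_apply, conj_trivial, hw, hD, PiLp.toLp_apply]
      by_cases hi : (i : ℕ) < d
      · simp only [hi, if_true]
        field_simp
      · simp [hi]
    rw [this]
    simp
  · rw [inner_smul_left, EuclideanSpace.inner_single_right]
    simp only [conj_trivial, map_inv₀, one_mul]
    rw [hwn]
    have hkey : 1 - N⁻¹ * v n < γ ^ 2 :=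
      stmt10_aux hγ0 hε hlam (by linarith) hεvn hS0 hS1 hN2 hvnN
    have h1 : 0 ≤ 1 - N⁻¹ * v n := by
      have : N⁻¹ * v n ≤ 1 := by
        rw [inv_mul_le_iff₀ hN0, mul_one]; exact hvnN
      linarith
    calc Real.sqrt (1 - N⁻¹ * v n) < Real.sqrt (γ ^ 2) :=
          Real.sqrt_lt_sqrt h1 hkey
      _ = γ := Real.sqrt_sq hγ0.le
end

section
/- Let ann ∈ 3^Z be fixed and define the relation t ≤ t' on tiles in T_ann by: ecc(t') ⊆ ecc(t) and R_t ∩ R_{t'} ≠ ∅; and t ≤_2 t' by: ecc(t') ⊆ ecc(t) and R_t ∩ K_n R_{t'} ≠ ∅, where K_n is the constant of the Geometric Lemma. Then: (a) if t ≤ t' ≤ t'' then t ≤_2 t''; (b) if t ≤_2 t' then R_t ⊆ K_n^2 R_{t'}. -/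
section GeometricLemma

variable {α ι : Type*} {Rdil : ι → ℝ → Set α} {ecc : ι → Set α} {K A : ℝ}

/-- `Rdil t A` is the `A`-dilate of the spatial parallelepiped of `t`; `K` plays the role of the
constant `K_n`. -/
def GeometricLemmaHolds (Rdil : ι → ℝ → Set α) (ecc : ι → Set α) (K : ℝ) : Prop :=
  ∀ A : ℝ, 1 ≤ A → ∀ t t' : ι, ecc t' ⊆ ecc t →
    (Rdil t A ∩ Rdil t' A).Nonempty → Rdil t A ⊆ Rdil t' (K * A)

theorem GeometricLemmaHolds.inter_nonempty_of_chain (hg : GeometricLemmaHolds Rdil ecc K)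
    (hA : 1 ≤ A) {t t' t'' : ι} (h₁ : (Rdil t A ∩ Rdil t' A).Nonempty)
    (he₂ : ecc t'' ⊆ ecc t') (h₂ : (Rdil t' A ∩ Rdil t'' A).Nonempty) :
    (Rdil t A ∩ Rdil t'' (K * A)).Nonempty :=
  let ⟨x, hxt, hxt'⟩ := h₁
  ⟨x, hxt, hg A hA t' t'' he₂ h₂ hxt'⟩

theorem GeometricLemmaHolds.subset_sq_mul (hg : GeometricLemmaHolds Rdil ecc K) (hK : 1 ≤ K)
    (hA : 1 ≤ A) {t t' : ι} (hmono : Monotone (Rdil t)) (he : ecc t' ⊆ ecc t)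
    (hne : (Rdil t A ∩ Rdil t' (K * A)).Nonempty) :
    Rdil t A ⊆ Rdil t' (K ^ 2 * A) := by
  have hA_le : A ≤ K * A := le_mul_of_one_le_left (by linarith) hK
  have hdil : Rdil t A ⊆ Rdil t (K * A) := hmono hA_le
  have hne' : (Rdil t (K * A) ∩ Rdil t' (K * A)).Nonempty :=
    hne.mono (Set.inter_subset_inter_left _ hdil)
  calc Rdil t A ⊆ Rdil t (K * A) := hdil
    _ ⊆ Rdil t' (K * (K * A)) := hg (K * A) (hA.trans hA_le) t t' he hne'
    _ = Rdil t' (K ^ 2 * A) := by rw [← mul_assoc, sq]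

end GeometricLemma

/-- Quasi-transitivity of the tile order.  With tiles abstracted by dilated spatial
components `Rdil t A` and eccentricity caps `ecc t`, and the Geometric Lemma `hgeom`
(for `A ≥ 1`, nested caps and intersecting `A`-dilates force `A R_t ⊆ K_n A R_{t'}`):
(a) `t ≤ t' ≤ t''` implies `t ≤₂ t''`, i.e. `ecc t'' ⊆ ecc t` and `R_t ∩ K_n R_{t''} ≠ ∅`;
(b) `t ≤₂ t'` implies `R_t ⊆ K_n² R_{t'}`. -/
theorem stmt13 (n : ℕ) (ι : Type*)
    (Rdil : ι → ℝ → Set (Fin n → ℝ)) (ecc : ι → Set (Fin n → ℝ))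
    (Kn : ℝ) (hKn : 1 ≤ Kn)
    (hmono : ∀ t : ι, ∀ A B : ℝ, A ≤ B → Rdil t A ⊆ Rdil t B)
    (hgeom : ∀ A : ℝ, 1 ≤ A → ∀ t t' : ι, ecc t' ⊆ ecc t →
      (Rdil t A ∩ Rdil t' A).Nonempty → Rdil t A ⊆ Rdil t' (Kn * A)) :
    (∀ t t' t'' : ι,
      (ecc t' ⊆ ecc t ∧ (Rdil t 1 ∩ Rdil t' 1).Nonempty) →
      (ecc t'' ⊆ ecc t' ∧ (Rdil t' 1 ∩ Rdil t'' 1).Nonempty) →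
      (ecc t'' ⊆ ecc t ∧ (Rdil t 1 ∩ Rdil t'' Kn).Nonempty)) ∧
    (∀ t t' : ι, ecc t' ⊆ ecc t → (Rdil t 1 ∩ Rdil t' Kn).Nonempty →
      Rdil t 1 ⊆ Rdil t' (Kn ^ 2)) := by
  have hg : GeometricLemmaHolds Rdil ecc Kn := hgeom
  refine ⟨fun t t' t'' ⟨he₁, h₁⟩ ⟨he₂, h₂⟩ => ⟨he₂.trans he₁, ?_⟩, fun t t' he hne => ?_⟩
  · simpa using hg.inter_nonempty_of_chain le_rfl h₁ he₂ h₂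
  · simpa using hg.subset_sq_mul hKn le_rfl (hmono t) he (by simpa using hne)
end
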